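/- Let K be a field of characteristic p > 2. The bilinear form α on O₁ = K[x]/(x^p) given by α(x^i,x^j) = i if i+j = p and 0 otherwise is nonzero, and hence HC¹(O₁)^{Der(O₁)}, the space of Der(O₁)-invariant cyclic 1-cocycles on O₁, is exactly one-dimensional, equal to all of HC¹(O₁). -/

import Mathlib

/-!
Let `d` be the derivative of `O₁ = K[x]/(x^p)`, well defined since `p = 0` in `K`. The cocycle
identity says that `b ↦ φ(-, b)` is a derivation into the dual, so `φ(a, b) = τ(a db)` with
`τ = φ(-, x)`, and skew-symmetry makes `τ` vanish on `d O₁`. Every derivation is `D = u d`, and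
`φ(Da, b) + φ(a, Db) = τ(d(a u db)) = 0`. Since `d(x^(n+1)) = (n+1) x^n`, `τ` kills `x^n` unless
`n = p - 1`, whence `φ = -τ(x^(p-1)) • α`.
-/

open Polynomial

structure IsCyclicCocycle {K A : Type*} [CommRing K] [Ring A] [Algebra K A]
    (φ : A →ₗ[K] A →ₗ[K] K) : Prop where
  skew : ∀ a b, φ a b = -φ b a
  cyclic : ∀ a b c, φ (a * b) c + φ (b * c) a + φ (c * a) b = 0

theorem Derivation.eq_smul_of_adjoin_singleton_eq_top {K A : Type*} [CommRing K] [CommRing A]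
    [Algebra K A] {r : A} (hr : Algebra.adjoin K {r} = ⊤) {d : Derivation K A A} (hd : d r = 1)
    (D : Derivation K A A) : D = D r • d :=
  Derivation.ext_of_adjoin_eq_top {r} hr <| Set.eqOn_singleton.2 <| by
    rw [Derivation.smul_apply, hd, smul_eq_mul, mul_one]

namespace IsCyclicCocycle

variable {K A : Type*} [CommRing K] [CommRing A] [Algebra K A] {φ : A →ₗ[K] A →ₗ[K] K}

theorem apply_one (hφ : IsCyclicCocycle φ) (a : A) : φ a 1 = 0 := by
  have h := hφ.cyclic a 1 1
  rw [mul_one, one_mul, one_mul, hφ.skew 1 a] at h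
  linear_combination h

theorem apply_mul (hφ : IsCyclicCocycle φ) (a b c : A) :
    φ a (b * c) = φ (a * b) c + φ (c * a) b := by
  linear_combination hφ.skew (b * c) a - hφ.cyclic a b c

variable {r : A} {d : Derivation K A A}

/-- `b ↦ φ(-, b)` is a derivation into the dual module (`apply_mul`), hence determined by its
value at the generator `r`. -/
theorem eq_apply_mul_derivation (hφ : IsCyclicCocycle φ) (hr : Algebra.adjoin K {r} = ⊤)
    (hd : d r = 1) (a b : A) :
    φ a b = φ (a * d b) r := by
  have hb : b ∈ Algebra.adjoin K {r} := hr ▸ Algebra.mem_top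
  induction hb using Algebra.adjoin_induction generalizing a with
  | mem x hx =>
    rw [Set.mem_singleton_iff.1 hx, hd, mul_one]
  | algebraMap k =>
    rw [Derivation.map_algebraMap, mul_zero, map_zero, LinearMap.zero_apply,
      Algebra.algebraMap_eq_smul_one, map_smul, hφ.apply_one, smul_zero]
  | add x y _ _ hx hy =>
    rw [map_add, hx, hy, map_add, mul_add, map_add, LinearMap.add_apply]
  | mul x y _ _ hx hy =>
    rw [hφ.apply_mul, hy, hx, Derivation.leibniz, smul_eq_mul, smul_eq_mul, mul_add, map_add,
      LinearMap.add_apply]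
    ring_nf

theorem apply_derivation_left_eq_zero (hφ : IsCyclicCocycle φ) (hr : Algebra.adjoin K {r} = ⊤)
    (hd : d r = 1) (a : A) : φ (d a) r = 0 := by
  have h := hφ.eq_apply_mul_derivation hr hd 1 a
  rwa [hφ.skew, hφ.apply_one, neg_zero, one_mul, eq_comm] at h

theorem derivation_invariant (hφ : IsCyclicCocycle φ) (hr : Algebra.adjoin K {r} = ⊤)
    (hd : d r = 1) (D : Derivation K A A) (a b : A) :
    φ (D a) b + φ a (D b) = 0 := by
  obtain ⟨u, hD⟩ : ∃ u, D = u • d :=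
    ⟨D r, Derivation.eq_smul_of_adjoin_singleton_eq_top hr hd D⟩
  calc φ (D a) b + φ a (D b) = φ (d (a * (u * d b))) r := by
        rw [hφ.eq_apply_mul_derivation hr hd (D a) b, hφ.eq_apply_mul_derivation hr hd a (D b),
          ← LinearMap.add_apply, ← map_add, hD]
        congr 2
        simp only [Derivation.smul_apply, Derivation.leibniz, smul_eq_mul]
        ring
    _ = 0 := hφ.apply_derivation_left_eq_zero hr hd _

end IsCyclicCocycle

namespace AdjoinRoot

variable (K : Type*) [CommRing K] (p : ℕ)

theorem root_X_pow_pow_eq_zero {n : ℕ} (hn : p ≤ n) : root (X ^ p : K[X]) ^ n = 0 :=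
  pow_eq_zero_of_le hn <| by rw [← mk_X, ← map_pow, mk_self]

variable [CharP K p]

/-- The formal derivative descends to `K[X]/(X^p)` because `(X^p)' = p X^(p-1) = 0`. -/
noncomputable def derivativeXPow :
    Derivation K (AdjoinRoot (X ^ p : K[X])) (AdjoinRoot (X ^ p : K[X])) :=
  Derivation.liftOfSurjective (f := mkₐ (X ^ p : K[X])) (by rw [coe_mkₐ]; exact mk_surjective)
    (d := derivative') <| by
    intro f hf
    obtain ⟨g, rfl⟩ := mk_eq_zero.1 hf
    simp [Derivation.leibniz_pow]

theorem derivativeXPow_root : derivativeXPow K p (root (X ^ p)) = 1 := by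
  rw [← mk_X, ← coe_mkₐ, derivativeXPow, Derivation.liftOfSurjective_apply]
  simp

end AdjoinRoot

namespace IsCyclicCocycle

open AdjoinRoot

variable {K : Type*} [CommRing K] [NoZeroDivisors K] {p : ℕ} [CharP K p]
  {φ : AdjoinRoot (X ^ p : K[X]) →ₗ[K] AdjoinRoot (X ^ p : K[X]) →ₗ[K] K}

theorem apply_root_pow_root_eq_zero (hφ : IsCyclicCocycle φ) {n : ℕ} (hn : n ≠ p - 1) :
    φ (root (X ^ p) ^ n) (root (X ^ p)) = 0 := by
  rcases le_or_gt p n with hpn | hnp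
  · rw [root_X_pow_pow_eq_zero K p hpn, map_zero, LinearMap.zero_apply]
  · have hn1 : ((n + 1 : ℕ) : K) ≠ 0 := by
      rw [ne_eq, CharP.cast_eq_zero_iff K p]
      exact Nat.not_dvd_of_pos_of_lt n.succ_pos (by omega)
    have h := hφ.apply_derivation_left_eq_zero adjoinRoot_eq_top (derivativeXPow_root K p)
      (root (X ^ p) ^ (n + 1))
    rw [Derivation.leibniz_pow, derivativeXPow_root, smul_eq_mul, mul_one, Nat.add_sub_cancel,
      map_nsmul, LinearMap.smul_apply, nsmul_eq_mul] at h
    exact (mul_eq_zero.1 h).resolve_left hn1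

theorem apply_root_pow_root_pow (hφ : IsCyclicCocycle φ) {i j : ℕ} (hi : i < p) (hj : j < p) :
    φ (root (X ^ p) ^ i) (root (X ^ p) ^ j) =
      -φ (root (X ^ p) ^ (p - 1)) (root (X ^ p)) * if i + j = p then (i : K) else 0 := by
  rw [hφ.skew, hφ.eq_apply_mul_derivation adjoinRoot_eq_top (derivativeXPow_root K p),
    Derivation.leibniz_pow, derivativeXPow_root, smul_eq_mul, mul_one, mul_smul_comm, ← pow_add,
    map_nsmul, LinearMap.smul_apply, nsmul_eq_mul]
  split_ifs with hij
  · rw [show j + (i - 1) = p - 1 by omega]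
    ring
  · rcases Nat.eq_zero_or_pos i with rfl | hi0
    · simp
    · rw [hφ.apply_root_pow_root_eq_zero (by omega)]
      ring

end IsCyclicCocycle

open AdjoinRoot in
theorem stmt_18_general (K : Type*) [Field K] (p : ℕ) (hp : p.Prime)
    [CharP K p]
    (α : AdjoinRoot (Polynomial.X ^ p : Polynomial K) →ₗ[K]
         AdjoinRoot (Polynomial.X ^ p : Polynomial K) →ₗ[K] K)
    (hα : ∀ i j : ℕ, i < p → j < p →
      α (AdjoinRoot.root (Polynomial.X ^ p : Polynomial K) ^ i)
        (AdjoinRoot.root (Polynomial.X ^ p : Polynomial K) ^ j)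
        = if i + j = p then (i : K) else 0) :
    α ≠ 0 ∧
    ∀ φ : AdjoinRoot (Polynomial.X ^ p : Polynomial K) →ₗ[K]
          AdjoinRoot (Polynomial.X ^ p : Polynomial K) →ₗ[K] K,
      (∀ a b, φ a b = - φ b a) →
      (∀ a b c, φ (a * b) c + φ (b * c) a + φ (c * a) b = 0) →
      (∀ (D : Derivation K (AdjoinRoot (Polynomial.X ^ p : Polynomial K))
            (AdjoinRoot (Polynomial.X ^ p : Polynomial K)))
         (a b : AdjoinRoot (Polynomial.X ^ p : Polynomial K)),
          φ (D a) b + φ a (D b) = 0) ∧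
      ∃ c : K, φ = c • α := by
  refine ⟨fun hα0 => ?_, fun φ hskew hcyc => ?_⟩
  · have hp1 := hp.one_lt
    have h := hα 1 (p - 1) hp1 (by omega)
    rw [hα0, if_pos (by omega)] at h
    simp at h
  · have hφ : IsCyclicCocycle φ := ⟨hskew, hcyc⟩
    refine ⟨hφ.derivation_invariant adjoinRoot_eq_top (derivativeXPow_root K p),
      -φ (root (X ^ p) ^ (p - 1)) (root (X ^ p)), ?_⟩
    let pb := powerBasis' (monic_X_pow p : (X ^ p : K[X]).Monic)
    have hdim : pb.dim = p := natDegree_X_pow p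
    refine LinearMap.ext_basis pb.basis pb.basis fun i j => ?_
    rw [LinearMap.smul_apply, LinearMap.smul_apply, smul_eq_mul, pb.coe_basis, powerBasis'_gen,
      hφ.apply_root_pow_root_pow (i.isLt.trans_eq hdim) (j.isLt.trans_eq hdim),
      hα _ _ (i.isLt.trans_eq hdim) (j.isLt.trans_eq hdim)]

/-- for p > 2, the form α on O₁ = K[x]/(x^p) with
α(x^i,x^j) = i·[i+j=p] is nonzero, and HC¹(O₁)^{Der(O₁)} is exactly
one-dimensional, equal to all of HC¹(O₁): every cyclic 1-cocycle on O₁ is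
invariant under all derivations and is a scalar multiple of α. -/
theorem stmt_18 (K : Type*) [Field K] (p : ℕ) (hp : p.Prime) (hp2 : 2 < p)
    [CharP K p]
    (α : AdjoinRoot (Polynomial.X ^ p : Polynomial K) →ₗ[K]
         AdjoinRoot (Polynomial.X ^ p : Polynomial K) →ₗ[K] K)
    (hα : ∀ i j : ℕ, i < p → j < p →
      α (AdjoinRoot.root (Polynomial.X ^ p : Polynomial K) ^ i)
        (AdjoinRoot.root (Polynomial.X ^ p : Polynomial K) ^ j)
        = if i + j = p then (i : K) else 0) :
    α ≠ 0 ∧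
    ∀ φ : AdjoinRoot (Polynomial.X ^ p : Polynomial K) →ₗ[K]
          AdjoinRoot (Polynomial.X ^ p : Polynomial K) →ₗ[K] K,
      (∀ a b, φ a b = - φ b a) →
      (∀ a b c, φ (a * b) c + φ (b * c) a + φ (c * a) b = 0) →
      (∀ (D : Derivation K (AdjoinRoot (Polynomial.X ^ p : Polynomial K))
            (AdjoinRoot (Polynomial.X ^ p : Polynomial K)))
         (a b : AdjoinRoot (Polynomial.X ^ p : Polynomial K)),
          φ (D a) b + φ a (D b) = 0) ∧
      ∃ c : K, φ = c • α :=
  stmt_18_general K p hp α hα
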